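/- arXiv:1502.01359 — 3 statements merged into one kernel-verified Lean document; each statement's English description precedes it below -/
import Mathlib

section
/- (Markov chains induced by interactive encoding of two nodes, item 2.) For every t ∈ {1,…,n} and every l ∈ {1,…,K}, the Markov chain (J_x^l, X_{[t+1:n]}) −∘− (J_x^{[1:l-1]}, J_y^{[1:l-1]}, X_{[1:t]}, Y_{[t+1:n]}) −∘− (Y_t, Z_t) holds; equivalently, I(J_x^l, X_{[t+1:n]} ; Y_t, Z_t | J_x^{[1:l-1]}, J_y^{[1:l-1]}, X_{[1:t]}, Y_{[t+1:n]}) = 0. -/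
noncomputable section

namespace IT

variable {Ω : Type*} [Fintype Ω]

open Classical in
/-- Probability of an event under a weight function on a finite sample space. -/
def pr (w : Ω → ℝ) (E : Ω → Prop) : ℝ := ∑ ω, if E ω then w ω else 0

open Classical in
/-- The distribution (pmf) of a random variable. -/
def dist (w : Ω → ℝ) {α : Type*} [Fintype α] (X : Ω → α) (a : α) : ℝ :=
  ∑ ω, if X ω = a then w ω else 0

/-- Shannon entropy (base 2). -/
def H (w : Ω → ℝ) {α : Type*} [Fintype α] (X : Ω → α) : ℝ :=
  -∑ a, dist w X a * Real.logb 2 (dist w X a)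

/-- Conditional entropy H(X|Y). -/
def condH (w : Ω → ℝ) {α β : Type*} [Fintype α] [Fintype β] (X : Ω → α) (Y : Ω → β) : ℝ :=
  H w (fun ω => (X ω, Y ω)) - H w Y

/-- Mutual information I(X;Y). -/
def mutInfo (w : Ω → ℝ) {α β : Type*} [Fintype α] [Fintype β] (X : Ω → α) (Y : Ω → β) : ℝ :=
  H w X + H w Y - H w (fun ω => (X ω, Y ω))

/-- Conditional mutual information I(X;Y|Z). -/
def condMutInfo (w : Ω → ℝ) {α β γ : Type*} [Fintype α] [Fintype β] [Fintype γ]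
    (X : Ω → α) (Y : Ω → β) (Z : Ω → γ) : ℝ :=
  condH w X Z - condH w X (fun ω => (Y ω, Z ω))

/-- Expectation of a real random variable. -/
def expect (w : Ω → ℝ) (f : Ω → ℝ) : ℝ := ∑ ω, w ω * f ω

end IT

/-- `p` is a probability mass function on a finite type. -/
def IsPMF {α : Type*} [Fintype α] (p : α → ℝ) : Prop := (∀ a, 0 ≤ p a) ∧ ∑ a, p a = 1

/-- The i.i.d. (product) weight on `n`-sequences induced by a single-letter pmf. -/
def iidW {α : Type*} (p : α → ℝ) (n : ℕ) : (Fin n → α) → ℝ := fun x => ∏ t, p (x t)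

/-- The first `l` components of a dependent tuple (the rest masked). -/
def trunc {K : ℕ} {γ : Fin K → Type*} (l : ℕ) (f : (k : Fin K) → γ k) :
    (k : Fin K) → Option (γ k) :=
  fun k => if k.val < l then some (f k) else none

/-- Coordinates with (0-based) index `< t`. -/
def below {n : ℕ} {α : Type*} (t : ℕ) (x : Fin n → α) : Fin n → Option α :=
  fun s => if s.val < t then some (x s) else none

/-- Coordinates with (0-based) index `> t`. -/
def above {n : ℕ} {α : Type*} (t : ℕ) (x : Fin n → α) : Fin n → Option α :=
  fun s => if t < s.val then some (x s) else none

/-- Coordinates with (0-based) index `≥ t`. -/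
def fromIdx {n : ℕ} {α : Type*} (t : ℕ) (x : Fin n → α) : Fin n → Option α :=
  fun s => if t ≤ s.val then some (x s) else none

open Classical in
/-- Number of occurrences of `a` in the sequence `x`. -/
def Nocc {n : ℕ} {α : Type*} (a : α) (x : Fin n → α) : ℕ :=
  (Finset.univ.filter fun t => x t = a).card

/-- Strongly typical set. -/
def typical {α : Type*} [Fintype α] (Q : α → ℝ) (δ : ℝ) (n : ℕ) : Set (Fin n → α) :=
  {x | ∀ a, Q a ≠ 0 → |(Nocc a x : ℝ) / n - Q a| ≤ δ / Fintype.card α}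


open IT

section CMIZero

open Real

variable {Ω : Type*} [Fintype Ω] {α β γ : Type*} [Fintype α] [Fintype β] [Fintype γ]

open Classical in
lemma dist_congr_aux (w : Ω → ℝ) {α' : Type*} [Fintype α'] (X : Ω → α) (X' : Ω → α')
    (v : α) (v' : α') (h : ∀ ω, X ω = v ↔ X' ω = v') :
    IT.dist w X v = IT.dist w X' v' := by
  unfold IT.dist
  exact Finset.sum_congr rfl fun ω _ => if_congr (h ω) rfl rfl

lemma dist_nonneg_aux (w : Ω → ℝ) (hw : ∀ ω, 0 ≤ w ω) (X : Ω → α) (a : α) :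
    0 ≤ IT.dist w X a := by
  unfold IT.dist
  refine Finset.sum_nonneg fun ω _ => ?_
  split <;> simp [hw ω]

open Classical in
lemma dist_marg_aux (w : Ω → ℝ) (U : Ω → α) (V : Ω → β) (v : β) :
    IT.dist w V v = ∑ u, IT.dist w (fun ω => (U ω, V ω)) (u, v) := by
  unfold IT.dist
  rw [Finset.sum_comm]
  refine Finset.sum_congr rfl fun ω _ => ?_
  by_cases h2 : V ω = v <;>
    simp [h2, Prod.ext_iff, ite_and, Finset.sum_ite_eq]

lemma cmi_zero_of_factor (w : Ω → ℝ) (hw : ∀ ω, 0 ≤ w ω)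
    (A : Ω → α) (B : Ω → β) (C : Ω → γ) (φ : α → γ → ℝ) (ψ : β → γ → ℝ)
    (hfac : ∀ a b c, IT.dist w (fun ω => (A ω, B ω, C ω)) (a, b, c) = φ a c * ψ b c) :
    IT.condMutInfo w A B C = 0 := by
  classical
  have q3nn : ∀ a b c, 0 ≤ IT.dist w (fun ω => (A ω, B ω, C ω)) (a, b, c) :=
    fun a b c => dist_nonneg_aux w hw _ _
  have hBC : ∀ b c, IT.dist w (fun ω => (B ω, C ω)) (b, c)
      = ∑ a, IT.dist w (fun ω => (A ω, B ω, C ω)) (a, b, c) := by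
    intro b c
    exact dist_marg_aux w A (fun ω => (B ω, C ω)) (b, c)
  have hAC : ∀ a c, IT.dist w (fun ω => (A ω, C ω)) (a, c)
      = ∑ b, IT.dist w (fun ω => (A ω, B ω, C ω)) (a, b, c) := by
    intro a c
    refine (dist_marg_aux w B (fun ω => (A ω, C ω)) (a, c)).trans ?_
    refine Finset.sum_congr rfl fun b _ => ?_
    refine dist_congr_aux w _ _ _ _ fun ω => ?_
    simp only [Prod.ext_iff]
    tauto
  have hC : ∀ c, IT.dist w C c
      = ∑ a, ∑ b, IT.dist w (fun ω => (A ω, B ω, C ω)) (a, b, c) := by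
    intro c
    rw [dist_marg_aux w A C c]
    exact Finset.sum_congr rfl fun a _ => hAC a c
  -- entropy expansions
  have e3 : IT.H w (fun ω => (A ω, B ω, C ω))
      = -∑ a, ∑ b, ∑ c, IT.dist w (fun ω => (A ω, B ω, C ω)) (a, b, c)
          * logb 2 (IT.dist w (fun ω => (A ω, B ω, C ω)) (a, b, c)) := by
    unfold IT.H
    rw [Fintype.sum_prod_type]
    congr 1
    exact Finset.sum_congr rfl fun a _ =>
      Fintype.sum_prod_type (fun x : β × γ =>
        IT.dist w (fun ω => (A ω, B ω, C ω)) (a, x)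
          * logb 2 (IT.dist w (fun ω => (A ω, B ω, C ω)) (a, x)))
  have e1 : IT.H w (fun ω => (A ω, C ω))
      = -∑ a, ∑ b, ∑ c, IT.dist w (fun ω => (A ω, B ω, C ω)) (a, b, c)
          * logb 2 (IT.dist w (fun ω => (A ω, C ω)) (a, c)) := by
    unfold IT.H
    rw [Fintype.sum_prod_type]
    congr 1
    refine Finset.sum_congr rfl fun a _ => ?_
    rw [Finset.sum_comm]
    refine Finset.sum_congr rfl fun c _ => ?_
    rw [hAC a c, Finset.sum_mul]
  have e4 : IT.H w (fun ω => (B ω, C ω))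
      = -∑ a, ∑ b, ∑ c, IT.dist w (fun ω => (A ω, B ω, C ω)) (a, b, c)
          * logb 2 (IT.dist w (fun ω => (B ω, C ω)) (b, c)) := by
    unfold IT.H
    rw [Fintype.sum_prod_type]
    congr 1
    rw [show (∑ b, ∑ c, IT.dist w (fun ω => (B ω, C ω)) (b, c)
          * logb 2 (IT.dist w (fun ω => (B ω, C ω)) (b, c)))
        = ∑ b, ∑ a, ∑ c, IT.dist w (fun ω => (A ω, B ω, C ω)) (a, b, c)
          * logb 2 (IT.dist w (fun ω => (B ω, C ω)) (b, c)) from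
      Finset.sum_congr rfl fun b _ => by
        rw [show (∑ c, IT.dist w (fun ω => (B ω, C ω)) (b, c)
              * logb 2 (IT.dist w (fun ω => (B ω, C ω)) (b, c)))
            = ∑ c, ∑ a, IT.dist w (fun ω => (A ω, B ω, C ω)) (a, b, c)
              * logb 2 (IT.dist w (fun ω => (B ω, C ω)) (b, c)) from
          Finset.sum_congr rfl fun c _ => by rw [hBC b c, Finset.sum_mul]]
        exact Finset.sum_comm]
    exact Finset.sum_comm
  have e2 : IT.H w C
      = -∑ a, ∑ b, ∑ c, IT.dist w (fun ω => (A ω, B ω, C ω)) (a, b, c)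
          * logb 2 (IT.dist w C c) := by
    unfold IT.H
    congr 1
    rw [show (∑ c, IT.dist w C c * logb 2 (IT.dist w C c))
        = ∑ c, ∑ a, ∑ b, IT.dist w (fun ω => (A ω, B ω, C ω)) (a, b, c)
            * logb 2 (IT.dist w C c) from
      Finset.sum_congr rfl fun c _ => by
        rw [hC c, Finset.sum_mul]
        exact Finset.sum_congr rfl fun a _ => Finset.sum_mul _ _ _,
      Finset.sum_comm]
    exact Finset.sum_congr rfl fun a _ => Finset.sum_comm
  -- pointwise key identity
  have key : ∀ a b c,
      IT.dist w (fun ω => (A ω, B ω, C ω)) (a, b, c)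
          * logb 2 (IT.dist w (fun ω => (A ω, B ω, C ω)) (a, b, c))
        + IT.dist w (fun ω => (A ω, B ω, C ω)) (a, b, c) * logb 2 (IT.dist w C c)
        - IT.dist w (fun ω => (A ω, B ω, C ω)) (a, b, c)
            * logb 2 (IT.dist w (fun ω => (A ω, C ω)) (a, c))
        - IT.dist w (fun ω => (A ω, B ω, C ω)) (a, b, c)
            * logb 2 (IT.dist w (fun ω => (B ω, C ω)) (b, c)) = 0 := by
    intro a b c
    by_cases hq : IT.dist w (fun ω => (A ω, B ω, C ω)) (a, b, c) = 0
    · simp [hq]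
    · have hqpos : 0 < IT.dist w (fun ω => (A ω, B ω, C ω)) (a, b, c) :=
        (q3nn a b c).lt_of_ne' hq
      have hacpos : 0 < IT.dist w (fun ω => (A ω, C ω)) (a, c) := by
        refine lt_of_lt_of_le hqpos ?_
        rw [hAC a c]
        exact Finset.single_le_sum (fun b' _ => q3nn a b' c) (Finset.mem_univ b)
      have hbcpos : 0 < IT.dist w (fun ω => (B ω, C ω)) (b, c) := by
        refine lt_of_lt_of_le hqpos ?_
        rw [hBC b c]
        exact Finset.single_le_sum (fun a' _ => q3nn a' b c) (Finset.mem_univ a)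
      have hcpos : 0 < IT.dist w C c := by
        refine lt_of_lt_of_le hacpos ?_
        rw [hAC a c, hC c]
        exact Finset.single_le_sum
          (fun a' _ => Finset.sum_nonneg fun b' _ => q3nn a' b' c) (Finset.mem_univ a)
      have hid : IT.dist w (fun ω => (A ω, B ω, C ω)) (a, b, c) * IT.dist w C c
          = IT.dist w (fun ω => (A ω, C ω)) (a, c)
            * IT.dist w (fun ω => (B ω, C ω)) (b, c) := by
        have hAC' : IT.dist w (fun ω => (A ω, C ω)) (a, c) = φ a c * ∑ b', ψ b' c := by
          rw [hAC a c, Finset.sum_congr rfl fun b' _ => hfac a b' c, Finset.mul_sum]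
        have hBC' : IT.dist w (fun ω => (B ω, C ω)) (b, c) = (∑ a', φ a' c) * ψ b c := by
          rw [hBC b c, Finset.sum_congr rfl fun a' _ => hfac a' b c, Finset.sum_mul]
        have hC' : IT.dist w C c = (∑ a', φ a' c) * ∑ b', ψ b' c := by
          rw [hC c, Finset.sum_congr rfl fun a' _ =>
            Finset.sum_congr rfl fun b' _ => hfac a' b' c, Finset.sum_mul]
          exact Finset.sum_congr rfl fun a' _ => (Finset.mul_sum _ _ _).symm
        rw [hfac a b c, hAC', hBC', hC']
        ring
      have hlog : logb 2 (IT.dist w (fun ω => (A ω, B ω, C ω)) (a, b, c))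
            + logb 2 (IT.dist w C c)
          = logb 2 (IT.dist w (fun ω => (A ω, C ω)) (a, c))
            + logb 2 (IT.dist w (fun ω => (B ω, C ω)) (b, c)) := by
        rw [← Real.logb_mul hqpos.ne' hcpos.ne', ← Real.logb_mul hacpos.ne' hbcpos.ne', hid]
      linear_combination IT.dist w (fun ω => (A ω, B ω, C ω)) (a, b, c) * hlog
  -- combine
  simp only [IT.condMutInfo, IT.condH]
  rw [e1, e2, e3, e4]
  have comb : (∑ a, ∑ b, ∑ c, IT.dist w (fun ω => (A ω, B ω, C ω)) (a, b, c)
          * logb 2 (IT.dist w (fun ω => (A ω, B ω, C ω)) (a, b, c)))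
      + (∑ a, ∑ b, ∑ c, IT.dist w (fun ω => (A ω, B ω, C ω)) (a, b, c)
          * logb 2 (IT.dist w C c))
      - (∑ a, ∑ b, ∑ c, IT.dist w (fun ω => (A ω, B ω, C ω)) (a, b, c)
          * logb 2 (IT.dist w (fun ω => (A ω, C ω)) (a, c)))
      - (∑ a, ∑ b, ∑ c, IT.dist w (fun ω => (A ω, B ω, C ω)) (a, b, c)
          * logb 2 (IT.dist w (fun ω => (B ω, C ω)) (b, c))) = 0 := by
    simp only [← Finset.sum_add_distrib, ← Finset.sum_sub_distrib]
    exact Finset.sum_eq_zero fun a _ => Finset.sum_eq_zero fun b _ =>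
      Finset.sum_eq_zero fun c _ => key a b c
  linarith [comb]

end CMIZero

section Factor

variable {XA YA ZA : Type} [Fintype XA] [Fintype YA] [Fintype ZA] {n K : ℕ}
  {mx my : Fin K → ℕ}

/-- marginal over Z -/
def pZ (p : XA × YA × ZA → ℝ) (u : XA) (v : YA) : ℝ := ∑ zz, p (u, v, zz)

def pxyO (p : XA × YA × ZA → ℝ) (u : XA) (vo : Option YA) : ℝ :=
  match vo with
  | some v => pZ p u v
  | none => 0

def pxyO2 (p : XA × YA × ZA → ℝ) (uo : Option XA) (v : YA) : ℝ :=
  match uo with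
  | some u => pZ p u v
  | none => 0

def pO (p : XA × YA × ZA → ℝ) (uo : Option XA) (v : YA) (zv : ZA) : ℝ :=
  match uo with
  | some u => p (u, v, zv)
  | none => 0

/-- x is consistent with the masked transcript (jxo, jyo), produces a1 at round l. -/
def PXdef (l : Fin K)
    (fx : (k : Fin K) → (Fin n → XA) → ((k' : Fin K) → k'.val < k.val → Fin (mx k')) →
      ((k' : Fin K) → k'.val < k.val → Fin (my k')) → Fin (mx k))
    (jxo : (k : Fin K) → Option (Fin (mx k))) (jyo : (k : Fin K) → Option (Fin (my k)))
    (a1 : Fin (mx l)) (x : Fin n → XA) : Prop :=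
  ∃ (jx : (k : Fin K) → Fin (mx k)) (jy : (k : Fin K) → Fin (my k)),
    (∀ k, jxo k = if k.val < l.val then some (jx k) else none) ∧
    (∀ k, jyo k = if k.val < l.val then some (jy k) else none) ∧
    (∀ k : Fin K, k.val < l.val →
      fx k x (fun k' _ => jx k') (fun k' _ => jy k') = jx k) ∧
    fx l x (fun k _ => jx k) (fun k _ => jy k) = a1

/-- y is consistent with the masked transcript (jxo, jyo). -/
def PYdef (l : Fin K)
    (fy : (k : Fin K) → (Fin n → YA) → ((k' : Fin K) → k'.val ≤ k.val → Fin (mx k')) →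
      ((k' : Fin K) → k'.val < k.val → Fin (my k')) → Fin (my k))
    (jxo : (k : Fin K) → Option (Fin (mx k))) (jyo : (k : Fin K) → Option (Fin (my k)))
    (y : Fin n → YA) : Prop :=
  ∃ (jx : (k : Fin K) → Fin (mx k)) (jy : (k : Fin K) → Fin (my k)),
    (∀ k, jxo k = if k.val < l.val then some (jx k) else none) ∧
    (∀ k, jyo k = if k.val < l.val then some (jy k) else none) ∧
    (∀ k : Fin K, k.val < l.val →
      fy k y (fun k' _ => jx k') (fun k' _ => jy k') = jy k)

/-- Rectangle property of interactive protocols. -/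
lemma proto_aux
    (Jx : (k : Fin K) → (Fin n → XA × YA × ZA) → Fin (mx k))
    (Jy : (k : Fin K) → (Fin n → XA × YA × ZA) → Fin (my k))
    (fx : (k : Fin K) → (Fin n → XA) → ((k' : Fin K) → k'.val < k.val → Fin (mx k')) →
      ((k' : Fin K) → k'.val < k.val → Fin (my k')) → Fin (mx k))
    (fy : (k : Fin K) → (Fin n → YA) → ((k' : Fin K) → k'.val ≤ k.val → Fin (mx k')) →
      ((k' : Fin K) → k'.val < k.val → Fin (my k')) → Fin (my k))
    (hfx : ∀ k ω, Jx k ω = fx k (fun s => (ω s).1) (fun k' _ => Jx k' ω) (fun k' _ => Jy k' ω))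
    (hfy : ∀ k ω, Jy k ω = fy k (fun s => (ω s).2.1) (fun k' _ => Jx k' ω) (fun k' _ => Jy k' ω))
    (l : Fin K) (jxo : (k : Fin K) → Option (Fin (mx k))) (jyo : (k : Fin K) → Option (Fin (my k)))
    (a1 : Fin (mx l)) (ω : Fin n → XA × YA × ZA) :
    ((trunc l.val (fun k => Jx k ω) = jxo) ∧ (trunc l.val (fun k => Jy k ω) = jyo)
        ∧ Jx l ω = a1)
      ↔ (PXdef l fx jxo jyo a1 (fun s => (ω s).1) ∧ PYdef l fy jxo jyo (fun s => (ω s).2.1)) := by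
  constructor
  · rintro ⟨hjx, hjy, hl⟩
    have hEx : ∀ k, jxo k = if k.val < l.val then some (Jx k ω) else none := fun k => by
      rw [← hjx]; rfl
    have hEy : ∀ k, jyo k = if k.val < l.val then some (Jy k ω) else none := fun k => by
      rw [← hjy]; rfl
    exact ⟨⟨fun k => Jx k ω, fun k => Jy k ω, hEx, hEy, fun k _ => (hfx k ω).symm,
        (hfx l ω).symm.trans hl⟩,
      fun k => Jx k ω, fun k => Jy k ω, hEx, hEy, fun k _ => (hfy k ω).symm⟩
  · rintro ⟨⟨jx, jy, hEx, hEy, hRx, hfl⟩, jx', jy', hEx', hEy', hRy⟩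
    have agx : ∀ k : Fin K, k.val < l.val → jx' k = jx k := by
      intro k hk
      have h1 := (hEx k).symm.trans (hEx' k)
      rw [if_pos hk, if_pos hk] at h1
      exact (Option.some_inj.mp h1).symm
    have agy : ∀ k : Fin K, k.val < l.val → jy' k = jy k := by
      intro k hk
      have h1 := (hEy k).symm.trans (hEy' k)
      rw [if_pos hk, if_pos hk] at h1
      exact (Option.some_inj.mp h1).symm
    have key : ∀ m : ℕ, ∀ k : Fin K, k.val = m → k.val < l.val →
        Jx k ω = jx k ∧ Jy k ω = jy k := by
      intro m
      induction m using Nat.strong_induction_on with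
      | _ m ih =>
        intro k hkm hkl
        have hx : Jx k ω = jx k := by
          rw [hfx k ω]
          rw [show (fun k' (h : k'.val < k.val) => Jx k' ω)
              = (fun k' (_ : k'.val < k.val) => jx k') from
            funext fun k' => funext fun h => (ih k'.val (hkm ▸ h) k' rfl (h.trans hkl)).1]
          rw [show (fun k' (h : k'.val < k.val) => Jy k' ω)
              = (fun k' (_ : k'.val < k.val) => jy k') from
            funext fun k' => funext fun h => (ih k'.val (hkm ▸ h) k' rfl (h.trans hkl)).2]
          exact hRx k hkl
        have hy : Jy k ω = jy k := by
          rw [hfy k ω]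
          rw [show (fun k' (h : k'.val ≤ k.val) => Jx k' ω)
              = (fun k' (_ : k'.val ≤ k.val) => jx' k') from
            funext fun k' => funext fun h => by
              rcases lt_or_eq_of_le h with h' | h'
              · exact (ih k'.val (hkm ▸ h') k' rfl (h'.trans hkl)).1.trans
                  (agx k' (h'.trans hkl)).symm
              · have hkk : k' = k := Fin.ext h'
                subst hkk
                exact hx.trans (agx k' hkl).symm]
          rw [show (fun k' (h : k'.val < k.val) => Jy k' ω)
              = (fun k' (_ : k'.val < k.val) => jy' k') from
            funext fun k' => funext fun h =>
              (ih k'.val (hkm ▸ h) k' rfl (h.trans hkl)).2.trans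
                (agy k' (h.trans hkl)).symm]
          exact (hRy k hkl).trans (agy k hkl)
        exact ⟨hx, hy⟩
    refine ⟨?_, ?_, ?_⟩
    · funext k
      show (if k.val < l.val then some (Jx k ω) else none) = jxo k
      rw [hEx k]
      by_cases hk : k.val < l.val
      · rw [if_pos hk, if_pos hk, (key k.val k rfl hk).1]
      · rw [if_neg hk, if_neg hk]
    · funext k
      show (if k.val < l.val then some (Jy k ω) else none) = jyo k
      rw [hEy k]
      by_cases hk : k.val < l.val
      · rw [if_pos hk, if_pos hk, (key k.val k rfl hk).2]
      · rw [if_neg hk, if_neg hk]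
    · rw [hfx l ω]
      rw [show (fun k (h : k.val < l.val) => Jx k ω)
          = (fun k (_ : k.val < l.val) => jx k) from
        funext fun k => funext fun h => (key k.val k rfl h).1]
      rw [show (fun k (h : k.val < l.val) => Jy k ω)
          = (fun k (_ : k.val < l.val) => jy k) from
        funext fun k => funext fun h => (key k.val k rfl h).2]
      exact hfl

def tripleEquiv (XA YA ZA : Type) (n : ℕ) :
    ((Fin n → XA) × (Fin n → YA) × (Fin n → ZA)) ≃ (Fin n → XA × YA × ZA) where
  toFun := fun q s => (q.1 s, q.2.1 s, q.2.2 s)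
  invFun := fun ω => (fun s => (ω s).1, fun s => (ω s).2.1, fun s => (ω s).2.2)
  left_inv := fun _ => rfl
  right_inv := fun _ => rfl

open Classical in
/-- Marginalizing out `z` for a fixed pair of sequences. -/
lemma zmarg (p : XA × YA × ZA → ℝ) (t : Fin n) (b2 : ZA) (x : Fin n → XA) (y : Fin n → YA) :
    (∑ z : Fin n → ZA, if z t = b2 then ∏ s, p (x s, y s, z s) else 0)
      = p (x t, y t, b2) * (∏ s, if s.val < t.val then pZ p (x s) (y s) else 1)
        * (∏ s, if t.val < s.val then pZ p (x s) (y s) else 1) := by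
  classical
  have h1 : ∀ z : Fin n → ZA, (if z t = b2 then ∏ s, p (x s, y s, z s) else 0)
      = ∏ s, (if s = t then (if z s = b2 then p (x s, y s, z s) else 0)
          else p (x s, y s, z s)) := by
    intro z
    by_cases hz : z t = b2
    · rw [if_pos hz]
      refine Finset.prod_congr rfl fun s _ => ?_
      by_cases hs : s = t
      · subst hs; rw [if_pos rfl, if_pos hz]
      · rw [if_neg hs]
    · rw [if_neg hz]
      symm
      refine Finset.prod_eq_zero (Finset.mem_univ t) ?_
      rw [if_pos rfl, if_neg hz]
  rw [Finset.sum_congr rfl fun z _ => h1 z]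
  rw [show (∑ z : Fin n → ZA, ∏ s, (if s = t then (if z s = b2 then p (x s, y s, z s) else 0)
        else p (x s, y s, z s)))
      = ∏ s, ∑ v, (if s = t then (if v = b2 then p (x s, y s, v) else 0)
        else p (x s, y s, v)) from
    (Fintype.prod_sum fun s v => (if s = t then (if v = b2 then p (x s, y s, v) else 0)
        else p (x s, y s, v))).symm]
  have h2 : (∏ s, ∑ v, (if s = t then (if v = b2 then p (x s, y s, v) else 0)
        else p (x s, y s, v)))
      = ∏ s, (if s = t then p (x s, y s, b2) else pZ p (x s) (y s)) := by
    refine Finset.prod_congr rfl fun s _ => ?_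
    by_cases hs : s = t
    · simp only [if_pos hs]
      rw [Finset.sum_ite_eq' Finset.univ b2 fun v => p (x s, y s, v),
        if_pos (Finset.mem_univ b2)]
    · simp only [if_neg hs]
      rfl
  rw [h2]
  have h3 : (∏ s, (if s = t then p (x s, y s, b2) else pZ p (x s) (y s)))
      = p (x t, y t, b2) * ∏ s, (if s = t then 1 else pZ p (x s) (y s)) := by
    rw [show (∏ s, (if s = t then p (x s, y s, b2) else pZ p (x s) (y s)))
        = ∏ s, ((if s = t then p (x t, y t, b2) else 1)
            * (if s = t then 1 else pZ p (x s) (y s))) from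
      Finset.prod_congr rfl fun s _ => by
        by_cases hs : s = t
        · subst hs; simp
        · simp [hs]]
    rw [Finset.prod_mul_distrib, Finset.prod_ite_eq' Finset.univ t fun _ => p (x t, y t, b2),
      if_pos (Finset.mem_univ t)]
  rw [h3]
  have h4 : (∏ s, (if s = t then 1 else pZ p (x s) (y s)))
      = (∏ s, if s.val < t.val then pZ p (x s) (y s) else 1)
        * (∏ s, if t.val < s.val then pZ p (x s) (y s) else 1) := by
    rw [← Finset.prod_mul_distrib]
    refine Finset.prod_congr rfl fun s _ => ?_
    by_cases hs : s = t
    · subst hs; simp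
    · have hv : s.val ≠ t.val := fun hh => hs (Fin.ext hh)
      rcases lt_or_gt_of_ne hv with h | h
      · rw [if_neg hs, if_pos h, if_neg (by omega), mul_one]
      · rw [if_neg hs, if_neg (by omega), if_pos h, one_mul]
  rw [h4, ← mul_assoc]

lemma factor_aux (p : XA × YA × ZA → ℝ)
    (Jx : (k : Fin K) → (Fin n → XA × YA × ZA) → Fin (mx k))
    (Jy : (k : Fin K) → (Fin n → XA × YA × ZA) → Fin (my k))
    (fx : (k : Fin K) → (Fin n → XA) → ((k' : Fin K) → k'.val < k.val → Fin (mx k')) →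
      ((k' : Fin K) → k'.val < k.val → Fin (my k')) → Fin (mx k))
    (fy : (k : Fin K) → (Fin n → YA) → ((k' : Fin K) → k'.val ≤ k.val → Fin (mx k')) →
      ((k' : Fin K) → k'.val < k.val → Fin (my k')) → Fin (my k))
    (hfx : ∀ k ω, Jx k ω = fx k (fun s => (ω s).1) (fun k' _ => Jx k' ω) (fun k' _ => Jy k' ω))
    (hfy : ∀ k ω, Jy k ω = fy k (fun s => (ω s).2.1) (fun k' _ => Jx k' ω) (fun k' _ => Jy k' ω))
    (t : Fin n) (l : Fin K) :
    ∃ (φ : (Fin (mx l) × (Fin n → Option XA)) →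
        (((k : Fin K) → Option (Fin (mx k))) × ((k : Fin K) → Option (Fin (my k)))
          × (Fin n → Option XA) × (Fin n → Option YA)) → ℝ)
      (ψ : (YA × ZA) →
        (((k : Fin K) → Option (Fin (mx k))) × ((k : Fin K) → Option (Fin (my k)))
          × (Fin n → Option XA) × (Fin n → Option YA)) → ℝ),
      ∀ a b c,
        IT.dist (iidW p n)
          (fun ω => ((Jx l ω, above t.val fun s => (ω s).1),
            ((ω t).2.1, (ω t).2.2),
            (trunc l.val fun k => Jx k ω, trunc l.val fun k => Jy k ω,
              below (t.val + 1) fun s => (ω s).1, above t.val fun s => (ω s).2.1)))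
          (a, b, c) = φ a c * ψ b c := by
  classical
  refine ⟨
    fun a c => ∑ x : Fin n → XA,
      if (below (t.val + 1) x = c.2.2.1 ∧ above t.val x = a.2
            ∧ PXdef l fx c.1 c.2.1 a.1 x)
      then ∏ s, (if t.val < s.val then pxyO p (x s) (c.2.2.2 s) else 1)
      else 0,
    fun b c => ∑ y : Fin n → YA,
      if (above t.val y = c.2.2.2 ∧ y t = b.1 ∧ PYdef l fy c.1 c.2.1 y)
      then pO p (c.2.2.1 t) b.1 b.2
        * ∏ s, (if s.val < t.val then pxyO2 p (c.2.2.1 s) (y s) else 1)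
      else 0, ?_⟩
  rintro ⟨a1, a2⟩ ⟨b1, b2⟩ ⟨jxo, jyo, xb, ya⟩
  dsimp only
  calc
    IT.dist (iidW p n)
        (fun ω => ((Jx l ω, above t.val fun s => (ω s).1),
          ((ω t).2.1, (ω t).2.2),
          (trunc l.val fun k => Jx k ω, trunc l.val fun k => Jy k ω,
            below (t.val + 1) fun s => (ω s).1, above t.val fun s => (ω s).2.1)))
        ((a1, a2), (b1, b2), (jxo, jyo, xb, ya))
      = ∑ ω : Fin n → XA × YA × ZA,
          (if ((Jx l ω, above t.val fun s => (ω s).1),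
              ((ω t).2.1, (ω t).2.2),
              (trunc l.val fun k => Jx k ω, trunc l.val fun k => Jy k ω,
                below (t.val + 1) fun s => (ω s).1, above t.val fun s => (ω s).2.1))
            = ((a1, a2), (b1, b2), (jxo, jyo, xb, ya))
          then iidW p n ω else 0) := by
        unfold IT.dist
        refine Finset.sum_congr rfl fun ω _ => ?_
        congr 1
    _ = ∑ q : (Fin n → XA) × (Fin n → YA) × (Fin n → ZA),
          (if ((Jx l (tripleEquiv XA YA ZA n q), above t.val fun s => ((tripleEquiv XA YA ZA n q) s).1),
              (((tripleEquiv XA YA ZA n q) t).2.1, ((tripleEquiv XA YA ZA n q) t).2.2),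
              (trunc l.val fun k => Jx k (tripleEquiv XA YA ZA n q),
                trunc l.val fun k => Jy k (tripleEquiv XA YA ZA n q),
                below (t.val + 1) fun s => ((tripleEquiv XA YA ZA n q) s).1,
                above t.val fun s => ((tripleEquiv XA YA ZA n q) s).2.1))
            = ((a1, a2), (b1, b2), (jxo, jyo, xb, ya))
          then iidW p n (tripleEquiv XA YA ZA n q) else 0) := by
        exact (Equiv.sum_comp (tripleEquiv XA YA ZA n) (fun ω =>
          if ((Jx l ω, above t.val fun s => (ω s).1),
              ((ω t).2.1, (ω t).2.2),
              (trunc l.val fun k => Jx k ω, trunc l.val fun k => Jy k ω,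
                below (t.val + 1) fun s => (ω s).1, above t.val fun s => (ω s).2.1))
            = ((a1, a2), (b1, b2), (jxo, jyo, xb, ya))
          then iidW p n ω else 0)).symm
    _ = ∑ x : Fin n → XA, ∑ y : Fin n → YA, ∑ z : Fin n → ZA,
          (if ((Jx l (fun s => (x s, y s, z s)), above t.val x),
              (y t, z t),
              (trunc l.val fun k => Jx k (fun s => (x s, y s, z s)),
                trunc l.val fun k => Jy k (fun s => (x s, y s, z s)),
                below (t.val + 1) x, above t.val y))
            = ((a1, a2), (b1, b2), (jxo, jyo, xb, ya))
          then ∏ s, p (x s, y s, z s) else 0) := by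
        rw [Fintype.sum_prod_type]
        refine Finset.sum_congr rfl fun x _ => ?_
        exact Fintype.sum_prod_type _
    _ = ∑ x : Fin n → XA, ∑ y : Fin n → YA, ∑ z : Fin n → ZA,
          (if ((below (t.val + 1) x = xb ∧ above t.val x = a2 ∧ PXdef l fx jxo jyo a1 x)
              ∧ (above t.val y = ya ∧ y t = b1 ∧ PYdef l fy jxo jyo y)
              ∧ z t = b2)
          then ∏ s, p (x s, y s, z s) else 0) := by
        refine Finset.sum_congr rfl fun x _ => Finset.sum_congr rfl fun y _ =>
          Finset.sum_congr rfl fun z _ => if_congr ?_ rfl rfl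
        have hp := proto_aux Jx Jy fx fy hfx hfy l jxo jyo a1 (fun s => (x s, y s, z s))
        simp only [Prod.mk.injEq]
        constructor
        · rintro ⟨⟨h1, h2⟩, ⟨h3, h4⟩, h5, h6, h7, h8⟩
          obtain ⟨hPX, hPY⟩ := hp.mp ⟨h5, h6, h1⟩
          exact ⟨⟨h7, h2, hPX⟩, ⟨h8, h3, hPY⟩, h4⟩
        · rintro ⟨⟨h7, h2, hPX⟩, ⟨h8, h3, hPY⟩, h4⟩
          obtain ⟨h5, h6, h1⟩ := hp.mpr ⟨hPX, hPY⟩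
          exact ⟨⟨h1, h2⟩, ⟨h3, h4⟩, h5, h6, h7, h8⟩
    _ = ∑ x : Fin n → XA, ∑ y : Fin n → YA,
          ((if (below (t.val + 1) x = xb ∧ above t.val x = a2 ∧ PXdef l fx jxo jyo a1 x)
            then ∏ s, (if t.val < s.val then pxyO p (x s) (ya s) else 1) else 0)
          * (if (above t.val y = ya ∧ y t = b1 ∧ PYdef l fy jxo jyo y)
            then pO p (xb t) b1 b2
              * ∏ s, (if s.val < t.val then pxyO2 p (xb s) (y s) else 1) else 0)) := by
        refine Finset.sum_congr rfl fun x _ => Finset.sum_congr rfl fun y _ => ?_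
        by_cases hcx : below (t.val + 1) x = xb ∧ above t.val x = a2 ∧ PXdef l fx jxo jyo a1 x
        · by_cases hcy : above t.val y = ya ∧ y t = b1 ∧ PYdef l fy jxo jyo y
          · rw [if_pos hcx, if_pos hcy]
            rw [Finset.sum_congr rfl fun z (_ : z ∈ Finset.univ) =>
              if_congr (Iff.intro (fun h => h.2.2) (fun h => ⟨hcx, hcy, h⟩)) rfl rfl,
              zmarg p t b2 x y]
            obtain ⟨hbel, habv, hPX⟩ := hcx
            obtain ⟨hya, hyt, hPY⟩ := hcy
            have hxbt : xb t = some (x t) := by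
              rw [← hbel]
              show (if t.val < t.val + 1 then some (x t) else none) = some (x t)
              rw [if_pos (Nat.lt_succ_self _)]
            have hB : (∏ s, if s.val < t.val then pZ p (x s) (y s) else 1)
                = ∏ s, (if s.val < t.val then pxyO2 p (xb s) (y s) else 1) := by
              refine Finset.prod_congr rfl fun s _ => ?_
              by_cases h : s.val < t.val
              · rw [if_pos h, if_pos h]
                have hxs : xb s = some (x s) := by
                  rw [← hbel]
                  show (if s.val < t.val + 1 then some (x s) else none) = some (x s)
                  rw [if_pos (by omega)]
                rw [hxs]
                rfl
              · rw [if_neg h, if_neg h]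
            have hC : (∏ s, if t.val < s.val then pZ p (x s) (y s) else 1)
                = ∏ s, (if t.val < s.val then pxyO p (x s) (ya s) else 1) := by
              refine Finset.prod_congr rfl fun s _ => ?_
              by_cases h : t.val < s.val
              · rw [if_pos h, if_pos h]
                have hys : ya s = some (y s) := by
                  rw [← hya]
                  show (if t.val < s.val then some (y s) else none) = some (y s)
                  rw [if_pos h]
                rw [hys]
                rfl
              · rw [if_neg h, if_neg h]
            have hA : p (x t, y t, b2) = pO p (xb t) b1 b2 := by
              rw [hyt, hxbt]
              rfl
            rw [hA, hB, hC]
            ring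
          · rw [if_neg hcy, mul_zero]
            exact Finset.sum_eq_zero fun z _ => if_neg (by tauto)
        · rw [if_neg hcx, zero_mul]
          exact Finset.sum_eq_zero fun z _ => if_neg (by tauto)
    _ = (∑ x : Fin n → XA,
          if (below (t.val + 1) x = xb ∧ above t.val x = a2 ∧ PXdef l fx jxo jyo a1 x)
          then ∏ s, (if t.val < s.val then pxyO p (x s) (ya s) else 1) else 0)
        * (∑ y : Fin n → YA,
          if (above t.val y = ya ∧ y t = b1 ∧ PYdef l fy jxo jyo y)
          then pO p (xb t) b1 b2
            * ∏ s, (if s.val < t.val then pxyO2 p (xb s) (y s) else 1) else 0) := by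
        rw [Fintype.sum_mul_sum]

end Factor

/-- **Lemma (interactive encoding of two nodes), item 2:**
`(J_x^l, X_{[t+1:n]}) -∘- (J_x^{[1:l-1]}, J_y^{[1:l-1]}, X_{[1:t]}, Y_{[t+1:n]}) -∘- (Y_t, Z_t)`. -/
theorem two_node_interactive_markov_item2
    {XA YA ZA : Type} [Fintype XA] [Fintype YA] [Fintype ZA]
    (p : XA × YA × ZA → ℝ) (hp : IsPMF p)
    {n K : ℕ} (mx my : Fin K → ℕ)
    (Jx : (l : Fin K) → (Fin n → XA × YA × ZA) → Fin (mx l))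
    (Jy : (l : Fin K) → (Fin n → XA × YA × ZA) → Fin (my l))
    -- J_x^l = f_x^l(Xⁿ, J_x^{[1:l-1]}, J_y^{[1:l-1]})
    (hJx : ∀ l : Fin K, ∃ f : (Fin n → XA) →
        ((k : Fin K) → k.val < l.val → Fin (mx k)) →
        ((k : Fin K) → k.val < l.val → Fin (my k)) → Fin (mx l),
      ∀ ω, Jx l ω = f (fun t => (ω t).1) (fun k _ => Jx k ω) (fun k _ => Jy k ω))
    -- J_y^l = f_y^l(Yⁿ, J_x^{[1:l]}, J_y^{[1:l-1]})
    (hJy : ∀ l : Fin K, ∃ f : (Fin n → YA) →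
        ((k : Fin K) → k.val ≤ l.val → Fin (mx k)) →
        ((k : Fin K) → k.val < l.val → Fin (my k)) → Fin (my l),
      ∀ ω, Jy l ω = f (fun t => (ω t).2.1) (fun k _ => Jx k ω) (fun k _ => Jy k ω))
    :
    ∀ (t : Fin n) (l : Fin K),
      IT.condMutInfo (iidW p n)
        (fun ω => (Jx l ω, above t.val (fun s => (ω s).1)))
        (fun ω => ((ω t).2.1, (ω t).2.2))
        (fun ω => (trunc l.val (fun k => Jx k ω), trunc l.val (fun k => Jy k ω),
          below (t.val + 1) (fun s => (ω s).1), above t.val (fun s => (ω s).2.1))) = 0 := by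
  intro t l
  choose fx hfx using hJx
  choose fy hfy using hJy
  obtain ⟨φ, ψ, hfac⟩ := factor_aux p Jx Jy fx fy hfx hfy t l
  exact cmi_zero_of_factor (iidW p n)
    (fun ω => Finset.prod_nonneg fun s _ => hp.1 _) _ _ _ φ ψ hfac
end
end

section
/- (Markov chains induced by interactive encoding of two nodes, items 4 and 5.) For every t ∈ {1,…,n}, the following Markov chains hold: (i) X_{[t+1:n]} −∘− (J_x^{[1:K]}, J_y^{[1:K]}, X_{[1:t]}, Y_{[t+1:n]}) −∘− (Y_t, Z_t); and (ii) Y_{[1:t-1]} −∘− (J_x^{[1:K]}, J_y^{[1:K]}, X_{[1:t-1]}, Y_{[t:n]}) −∘− (X_t, Z_t). -/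
noncomputable section

open IT

/-!
Split the coordinates into two blocks and let `mix ω ω'` take the first block from `ω` and the
second from `ω'`. The i.i.d. weight satisfies `w ω * w ω' = w (mix ω ω') * w (mix ω' ω)`, so
`(ω, ω') ↦ (mix ω ω', mix ω' ω)` is a weight-preserving involution of `Ω × Ω`. If `A` only sees the
first block, `B` only the second, and the level sets of `C` are closed under mixing, it maps
`{A = a, C = c} × {B = b, C = c}` onto `{(A, B, C) = (a, b, c)} × {C = c}`; hence
`p(a, b, c) p(c) = p(a, c) p(b, c)`, which is `I(A; B | C) = 0`.

For the conditioning variables of the theorem, closure under mixing is the rectangle property of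
interactive protocols: if the inputs `(x, y)` and `(x', y')` give the same transcript, so does
`(x, y')`. When `C ω = C ω'`, the revealed coordinates force the mixed point to carry the
`X`-sequence of `ω` and the `Y`-sequence of `ω'`.
-/

def IsRectangular {Ω γ : Type*} (mix : Ω → Ω → Ω) (C : Ω → γ) : Prop :=
  ∀ ω ω', C ω = C ω' → C (mix ω ω') = C ω

namespace IT

open Finset

variable {Ω α β γ : Type*} [Fintype Ω] [Fintype α] [Fintype β] [Fintype γ]

theorem sum_dist_mul (w : Ω → ℝ) (V : Ω → α) (f : α → ℝ) :
    ∑ a, dist w V a * f a = expect w (fun ω => f (V ω)) := by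
  classical
  simp only [dist, expect, sum_mul, ite_mul, zero_mul]
  rw [sum_comm]
  simp only [sum_ite_eq, mem_univ, if_true]

theorem H_eq_neg_expect (w : Ω → ℝ) (V : Ω → α) :
    H w V = -expect w (fun ω => Real.logb 2 (dist w V (V ω))) := by
  rw [H, sum_dist_mul w V (fun a => Real.logb 2 (dist w V a))]

theorem le_dist_apply {w : Ω → ℝ} (hw : ∀ ω, 0 ≤ w ω) (V : Ω → α) (ω : Ω) :
    w ω ≤ dist w V (V ω) := by
  classical
  calc w ω = if V ω = V ω then w ω else 0 := (if_pos rfl).symm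
    _ ≤ dist w V (V ω) :=
      single_le_sum (f := fun ω' => if V ω' = V ω then w ω' else 0)
        (fun ω' _ => by split_ifs <;> simp [hw]) (mem_univ ω)

theorem dist_comp_of_injective (w : Ω → ℝ) (V : Ω → α) {g : α → β} (hg : g.Injective) (a : α) :
    dist w (fun ω => g (V ω)) (g a) = dist w V a := by
  classical
  exact sum_congr rfl fun ω _ => if_congr hg.eq_iff rfl rfl

theorem condMutInfo_comm (w : Ω → ℝ) (A : Ω → α) (B : Ω → β) (C : Ω → γ) :
    condMutInfo w A B C = condMutInfo w B A C := by
  have hswap : H w (fun ω => (A ω, B ω, C ω)) = H w (fun ω => (B ω, A ω, C ω)) := by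
    have hg : Function.Injective fun v : β × α × γ => (v.2.1, v.1, v.2.2) :=
      fun v v' h => by simp only [Prod.mk.injEq] at h; ext <;> tauto
    simp only [H_eq_neg_expect]
    congr 3 with ω
    exact congrArg _ (dist_comp_of_injective w (fun ω => (B ω, A ω, C ω)) hg (B ω, A ω, C ω))
  simp only [condMutInfo, condH, hswap]
  ring

theorem condMutInfo_eq_zero_of_dist_mul_dist {w : Ω → ℝ} (hw : ∀ ω, 0 ≤ w ω)
    (A : Ω → α) (B : Ω → β) (C : Ω → γ)
    (h : ∀ a b c, dist w (fun ω => (A ω, B ω, C ω)) (a, b, c) * dist w C c =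
      dist w (fun ω => (A ω, C ω)) (a, c) * dist w (fun ω => (B ω, C ω)) (b, c)) :
    condMutInfo w A B C = 0 := by
  have key : ∀ ω,
      w ω * Real.logb 2 (dist w (fun ω => (A ω, B ω, C ω)) (A ω, B ω, C ω)) +
        w ω * Real.logb 2 (dist w C (C ω)) =
      w ω * Real.logb 2 (dist w (fun ω => (A ω, C ω)) (A ω, C ω)) +
        w ω * Real.logb 2 (dist w (fun ω => (B ω, C ω)) (B ω, C ω)) := by
    intro ω
    rcases (hw ω).eq_or_lt with hzero | hpos
    · simp [← hzero]
    rw [← mul_add, ← mul_add, ← Real.logb_mul, ← Real.logb_mul, h]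
    all_goals exact (hpos.trans_le (le_dist_apply hw _ ω)).ne'
  have hsum := sum_congr rfl fun ω (_ : ω ∈ univ) => key ω
  simp only [sum_add_distrib] at hsum
  simp only [condMutInfo, condH, H_eq_neg_expect, expect]
  linarith

theorem dist_mul_dist_eq_of_mix {w : Ω → ℝ} {mix : Ω → Ω → Ω}
    (hmix : ∀ ω ω', mix (mix ω ω') (mix ω' ω) = ω)
    (hw : ∀ ω ω', w ω * w ω' = w (mix ω ω') * w (mix ω' ω))
    {A : Ω → α} {B : Ω → β} {C : Ω → γ}
    (hA : ∀ ω ω', A (mix ω ω') = A ω) (hB : ∀ ω ω', B (mix ω ω') = B ω')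
    (hC : IsRectangular mix C) (a : α) (b : β) (c : γ) :
    dist w (fun ω => (A ω, B ω, C ω)) (a, b, c) * dist w C c =
      dist w (fun ω => (A ω, C ω)) (a, c) * dist w (fun ω => (B ω, C ω)) (b, c) := by
  have hinv : Function.Involutive fun x : Ω × Ω => (mix x.1 x.2, mix x.2 x.1) :=
    fun x => by simp [hmix]
  have hΦ : ∀ ω ω', ((A (mix ω ω'), B (mix ω ω'), C (mix ω ω')) = (a, b, c) ∧ C (mix ω' ω) = c) ↔
      ((A ω, C ω) = (a, c) ∧ (B ω', C ω') = (b, c)) := by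
    intro ω ω'
    simp only [Prod.mk.injEq, hA, hB]
    constructor
    · rintro ⟨⟨ha, hb, hc⟩, hc'⟩
      have h1 := hC _ _ (hc.trans hc'.symm)
      have h2 := hC _ _ (hc'.trans hc.symm)
      rw [hmix] at h1 h2
      exact ⟨⟨ha, h1.trans hc⟩, hb, h2.trans hc'⟩
    · rintro ⟨⟨ha, hc⟩, hb, hc'⟩
      have hCC := hc.trans hc'.symm
      exact ⟨⟨ha, hb, (hC _ _ hCC).trans hc⟩, (hC _ _ hCC.symm).trans hc'⟩
  simp only [dist, sum_mul_sum, ← Fintype.sum_prod_type', ite_zero_mul_ite_zero]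
  rw [← Equiv.sum_comp (Function.Involutive.toPerm _ hinv)]
  refine sum_congr rfl fun x _ => ?_
  simp only [Function.Involutive.coe_toPerm, ← hw]
  congr 1
  exact propext (hΦ x.1 x.2)

theorem condMutInfo_eq_zero_of_mix {w : Ω → ℝ} (hw0 : ∀ ω, 0 ≤ w ω) (mix : Ω → Ω → Ω)
    (hmix : ∀ ω ω', mix (mix ω ω') (mix ω' ω) = ω)
    (hw : ∀ ω ω', w ω * w ω' = w (mix ω ω') * w (mix ω' ω))
    {A : Ω → α} {B : Ω → β} {C : Ω → γ}
    (hA : ∀ ω ω', A (mix ω ω') = A ω) (hB : ∀ ω ω', B (mix ω ω') = B ω')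
    (hC : IsRectangular mix C) :
    condMutInfo w A B C = 0 :=
  condMutInfo_eq_zero_of_dist_mul_dist hw0 A B C (dist_mul_dist_eq_of_mix hmix hw hA hB hC)

end IT

theorem transcript_eq_of_mixed_inputs {Ω α β : Type*} {K : ℕ} {Mx My : Fin K → Type*}
    (X : Ω → α) (Y : Ω → β)
    (Jx : (l : Fin K) → Ω → Mx l) (Jy : (l : Fin K) → Ω → My l)
    (hJx : ∀ l : Fin K, ∃ f : α → ((k : Fin K) → k.val < l.val → Mx k) →
        ((k : Fin K) → k.val < l.val → My k) → Mx l,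
      ∀ ω, Jx l ω = f (X ω) (fun k _ => Jx k ω) (fun k _ => Jy k ω))
    (hJy : ∀ l : Fin K, ∃ f : β → ((k : Fin K) → k.val ≤ l.val → Mx k) →
        ((k : Fin K) → k.val < l.val → My k) → My l,
      ∀ ω, Jy l ω = f (Y ω) (fun k _ => Jx k ω) (fun k _ => Jy k ω))
    {ω ω' ω'' : Ω} (hX : X ω'' = X ω) (hY : Y ω'' = Y ω')
    (hJx' : ∀ l, Jx l ω = Jx l ω') (hJy' : ∀ l, Jy l ω = Jy l ω') (l : Fin K) :
    Jx l ω'' = Jx l ω ∧ Jy l ω'' = Jy l ω := by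
  choose fx hfx using hJx
  choose fy hfy using hJy
  induction l using WellFoundedLT.induction with
  | ind l ih =>
    have hx : Jx l ω'' = Jx l ω := by
      rw [hfx l ω'', hfx l ω, hX]
      congr 1 <;> funext k hk
      exacts [(ih k hk).1, (ih k hk).2]
    refine ⟨hx, ?_⟩
    rw [hfy l ω'', hJy' l, hfy l ω', hY]
    congr 1 <;> funext k hk
    · rcases hk.lt_or_eq with hlt | heq
      · rw [(ih k hlt).1, hJx']
      · rw [Fin.ext heq, hx, hJx']
    · rw [(ih k hk).2, hJy']

theorem Set.piecewise_piecewise_swap {ι : Type*} {T : ι → Type*} (S : Set ι)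
    [∀ i, Decidable (i ∈ S)] (f g : ∀ i, T i) :
    S.piecewise (S.piecewise f g) (S.piecewise g f) = f := by
  funext i
  by_cases hi : i ∈ S <;> simp [hi]

theorem iidW_mul_iidW_piecewise {α : Type*} (p : α → ℝ) {n : ℕ} (S : Set (Fin n))
    [∀ i, Decidable (i ∈ S)] (ω ω' : Fin n → α) :
    iidW p n ω * iidW p n ω' = iidW p n (S.piecewise ω ω') * iidW p n (S.piecewise ω' ω) := by
  simp only [iidW, ← Finset.prod_mul_distrib]
  refine Finset.prod_congr rfl fun i _ => ?_
  by_cases hi : i ∈ S <;> simp [hi, mul_comm]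

def maskOn {ι α : Type*} (Q : ι → Prop) [DecidablePred Q] (x : ι → α) : ι → Option α :=
  fun s => if Q s then some (x s) else none

theorem isRectangular_transcript_maskOn {ι T α β : Type*} {K : ℕ} {Mx My : Fin K → Type*}
    (S : Set ι) [∀ i, Decidable (i ∈ S)] {Qx Qy : ι → Prop} [DecidablePred Qx] [DecidablePred Qy]
    (hQx : ∀ s ∉ S, Qx s) (hQy : ∀ s ∈ S, Qy s) (πX : T → α) (πY : T → β)
    (Jx : (l : Fin K) → (ι → T) → Mx l) (Jy : (l : Fin K) → (ι → T) → My l)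
    (hJx : ∀ l : Fin K, ∃ f : (ι → α) → ((k : Fin K) → k.val < l.val → Mx k) →
        ((k : Fin K) → k.val < l.val → My k) → Mx l,
      ∀ ω, Jx l ω = f (fun s => πX (ω s)) (fun k _ => Jx k ω) (fun k _ => Jy k ω))
    (hJy : ∀ l : Fin K, ∃ f : (ι → β) → ((k : Fin K) → k.val ≤ l.val → Mx k) →
        ((k : Fin K) → k.val < l.val → My k) → My l,
      ∀ ω, Jy l ω = f (fun s => πY (ω s)) (fun k _ => Jx k ω) (fun k _ => Jy k ω)) :
    IsRectangular (fun ω ω' => S.piecewise ω ω') fun ω =>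
      ((fun k => Jx k ω), (fun k => Jy k ω),
        maskOn Qx (fun s => πX (ω s)), maskOn Qy (fun s => πY (ω s))) := by
  intro ω ω' h
  simp only [Prod.mk.injEq] at h ⊢
  obtain ⟨hjx, hjy, hmx, hmy⟩ := h
  have hX : (fun s => πX (S.piecewise ω ω' s)) = fun s => πX (ω s) := by
    funext s
    by_cases hs : s ∈ S
    · simp [hs]
    · simpa [hs, maskOn, hQx s hs] using (congrFun hmx s).symm
  have hY : (fun s => πY (S.piecewise ω ω' s)) = fun s => πY (ω' s) := by
    funext s
    by_cases hs : s ∈ S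
    · simpa [hs, maskOn, hQy s hs] using congrFun hmy s
    · simp [hs]
  have hJ := transcript_eq_of_mixed_inputs (fun ω s => πX (ω s)) (fun ω s => πY (ω s)) Jx Jy
    hJx hJy hX hY (congrFun hjx) (congrFun hjy)
  exact ⟨funext fun l => (hJ l).1, funext fun l => (hJ l).2, by rw [hX], by rw [hY, hmy]⟩

/-- **Lemma (interactive encoding of two nodes), items 4 and 5:**
(i) `X_{[t+1:n]} -∘- (J_x^{[1:K]}, J_y^{[1:K]}, X_{[1:t]}, Y_{[t+1:n]}) -∘- (Y_t, Z_t)` and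
(ii) `Y_{[1:t-1]} -∘- (J_x^{[1:K]}, J_y^{[1:K]}, X_{[1:t-1]}, Y_{[t:n]}) -∘- (X_t, Z_t)`. -/
theorem two_node_interactive_markov_items4_5
    {XA YA ZA : Type} [Fintype XA] [Fintype YA] [Fintype ZA]
    (p : XA × YA × ZA → ℝ) (hp : IsPMF p)
    {n K : ℕ} (mx my : Fin K → ℕ)
    (Jx : (l : Fin K) → (Fin n → XA × YA × ZA) → Fin (mx l))
    (Jy : (l : Fin K) → (Fin n → XA × YA × ZA) → Fin (my l))
    -- J_x^l = f_x^l(Xⁿ, J_x^{[1:l-1]}, J_y^{[1:l-1]})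
    (hJx : ∀ l : Fin K, ∃ f : (Fin n → XA) →
        ((k : Fin K) → k.val < l.val → Fin (mx k)) →
        ((k : Fin K) → k.val < l.val → Fin (my k)) → Fin (mx l),
      ∀ ω, Jx l ω = f (fun t => (ω t).1) (fun k _ => Jx k ω) (fun k _ => Jy k ω))
    -- J_y^l = f_y^l(Yⁿ, J_x^{[1:l]}, J_y^{[1:l-1]})
    (hJy : ∀ l : Fin K, ∃ f : (Fin n → YA) →
        ((k : Fin K) → k.val ≤ l.val → Fin (mx k)) →
        ((k : Fin K) → k.val < l.val → Fin (my k)) → Fin (my l),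
      ∀ ω, Jy l ω = f (fun t => (ω t).2.1) (fun k _ => Jx k ω) (fun k _ => Jy k ω))
    :
    ∀ t : Fin n,
      IT.condMutInfo (iidW p n)
        (fun ω => above t.val (fun s => (ω s).1))
        (fun ω => ((ω t).2.1, (ω t).2.2))
        (fun ω => ((fun k => Jx k ω), (fun k => Jy k ω),
          below (t.val + 1) (fun s => (ω s).1), above t.val (fun s => (ω s).2.1))) = 0 ∧
      IT.condMutInfo (iidW p n)
        (fun ω => below t.val (fun s => (ω s).2.1))
        (fun ω => ((ω t).1, (ω t).2.2))
        (fun ω => ((fun k => Jx k ω), (fun k => Jy k ω),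
          below t.val (fun s => (ω s).1), fromIdx t.val (fun s => (ω s).2.1))) = 0 := by
  have hw : ∀ ω, 0 ≤ iidW p n ω := fun ω => Finset.prod_nonneg fun s _ => hp.1 (ω s)
  intro t
  constructor
  · refine condMutInfo_eq_zero_of_mix hw (fun ω ω' => {s | t.val < s.val}.piecewise ω ω')
      (fun _ _ => Set.piecewise_piecewise_swap _ _ _) (fun _ _ => iidW_mul_iidW_piecewise p _ _ _)
      (fun ω ω' => ?_) (fun ω ω' => by simp)
      (isRectangular_transcript_maskOn _ (Qx := fun s => s.val < t.val + 1)
        (fun s hs => by simp at hs; omega) (fun _ hs => hs) _ (fun x => x.2.1) Jx Jy hJx hJy)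
    funext s
    by_cases hs : t < s <;> simp [above, Set.piecewise, hs]
  · rw [condMutInfo_comm]
    refine condMutInfo_eq_zero_of_mix hw (fun ω ω' => {s | t.val ≤ s.val}.piecewise ω ω')
      (fun _ _ => Set.piecewise_piecewise_swap _ _ _) (fun _ _ => iidW_mul_iidW_piecewise p _ _ _)
      (fun ω ω' => by simp) (fun ω ω' => ?_)
      (isRectangular_transcript_maskOn _ (Qx := fun s => s.val < t.val)
        (fun s hs => by simpa using hs) (fun _ hs => hs) _ (fun x => x.2.1) Jx Jy hJx hJy)
    funext s
    by_cases hs : s < t <;> simp [below, Set.piecewise, hs, not_le.mpr]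
end
end

section
/- (Markov chains induced by interactive encoding of two nodes, item 6.) For every t ∈ {1,…,n}, the Markov chain (J_x^{[1:K]}, J_y^{[1:K]}, X_{[1:t-1]}, X_{[t+1:n]}, Z_{[1:t-1]}, Z_{[t+1:n]}, Y_{[1:t-1]}) −∘− (X_t, Y_t) −∘− Z_t holds. -/
noncomputable section

section General
variable {Ω α β γ : Type*} [Fintype Ω] [Fintype α] [Fintype β] [Fintype γ]

lemma dist_nonneg' (w : Ω → ℝ) (hw : ∀ ω, 0 ≤ w ω) {δ : Type*} [Fintype δ] (X : Ω → δ) (a : δ) :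
    0 ≤ IT.dist w X a := by
  classical
  apply Finset.sum_nonneg
  intro ω _
  split <;> simp [hw ω]

lemma marg_AB (w : Ω → ℝ) (A : Ω → α) (Z : Ω → β) (B : Ω → γ) (a : α) (b : γ) :
    IT.dist w (fun ω => (A ω, B ω)) (a, b)
      = ∑ z, IT.dist w (fun ω => (A ω, (Z ω, B ω))) (a, (z, b)) := by
  classical
  unfold IT.dist
  rw [Finset.sum_comm]
  refine Finset.sum_congr rfl fun ω _ => ?_
  by_cases hA : A ω = a <;> by_cases hB : B ω = b <;>
    simp [Prod.ext_iff, hA, hB, Finset.sum_ite_eq']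

lemma marg_ZB (w : Ω → ℝ) (A : Ω → α) (Z : Ω → β) (B : Ω → γ) (z : β) (b : γ) :
    IT.dist w (fun ω => (Z ω, B ω)) (z, b)
      = ∑ a, IT.dist w (fun ω => (A ω, (Z ω, B ω))) (a, (z, b)) := by
  classical
  unfold IT.dist
  rw [Finset.sum_comm]
  refine Finset.sum_congr rfl fun ω _ => ?_
  by_cases hZ : Z ω = z <;> by_cases hB : B ω = b <;>
    simp [Prod.ext_iff, hZ, hB, Finset.sum_ite_eq']

lemma marg_single (w : Ω → ℝ) (Z : Ω → β) (B : Ω → γ) (b : γ) :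
    IT.dist w B b = ∑ z, IT.dist w (fun ω => (Z ω, B ω)) (z, b) := by
  classical
  unfold IT.dist
  rw [Finset.sum_comm]
  refine Finset.sum_congr rfl fun ω _ => ?_
  by_cases hB : B ω = b <;>
    simp [Prod.ext_iff, hB, Finset.sum_ite_eq']

lemma marg_B (w : Ω → ℝ) (A : Ω → α) (Z : Ω → β) (B : Ω → γ) (b : γ) :
    IT.dist w B b = ∑ a, ∑ z, IT.dist w (fun ω => (A ω, (Z ω, B ω))) (a, (z, b)) := by
  classical
  rw [marg_single w Z B b]
  rw [Finset.sum_congr rfl fun z _ => marg_ZB w A Z B z b]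
  exact Finset.sum_comm

lemma sum_mul_logb_marg {δ : Type*} [Fintype δ] (m : ℝ) (f : δ → ℝ) (hm : m = ∑ z, f z) :
    m * Real.logb 2 m = ∑ z, f z * Real.logb 2 m := by
  rw [hm, Finset.sum_mul]

lemma condMutInfo_eq_zero_of_indep (w : Ω → ℝ) (hw : ∀ ω, 0 ≤ w ω)
    (A : Ω → α) (Z : Ω → β) (B : Ω → γ)
    (h : ∀ a z b, IT.dist w (fun ω => (A ω, (Z ω, B ω))) (a, (z, b)) * IT.dist w B b
        = IT.dist w (fun ω => (A ω, B ω)) (a, b) * IT.dist w (fun ω => (Z ω, B ω)) (z, b)) :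
    IT.condMutInfo w A Z B = 0 := by
  classical
  have hqnn : ∀ a z b, 0 ≤ IT.dist w (fun ω => (A ω, (Z ω, B ω))) (a, (z, b)) :=
    fun a z b => dist_nonneg' w hw _ _
  have key : ∀ a z b,
      IT.dist w (fun ω => (A ω, (Z ω, B ω))) (a, (z, b))
          * Real.logb 2 (IT.dist w (fun ω => (A ω, (Z ω, B ω))) (a, (z, b)))
        + IT.dist w (fun ω => (A ω, (Z ω, B ω))) (a, (z, b)) * Real.logb 2 (IT.dist w B b)
        - IT.dist w (fun ω => (A ω, (Z ω, B ω))) (a, (z, b))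
          * Real.logb 2 (IT.dist w (fun ω => (A ω, B ω)) (a, b))
        - IT.dist w (fun ω => (A ω, (Z ω, B ω))) (a, (z, b))
          * Real.logb 2 (IT.dist w (fun ω => (Z ω, B ω)) (z, b)) = 0 := by
    intro a z b
    set q := IT.dist w (fun ω => (A ω, (Z ω, B ω))) (a, (z, b)) with hqdef
    by_cases hq0 : q = 0
    · simp [hq0]
    · have hqpos : 0 < q := lt_of_le_of_ne (hqnn a z b) (Ne.symm hq0)
      have hABpos : 0 < IT.dist w (fun ω => (A ω, B ω)) (a, b) := by
        rw [marg_AB w A Z B a b]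
        refine lt_of_lt_of_le hqpos ?_
        exact Finset.single_le_sum (fun z _ => hqnn a z b) (Finset.mem_univ z)
      have hZBpos : 0 < IT.dist w (fun ω => (Z ω, B ω)) (z, b) := by
        rw [marg_ZB w A Z B z b]
        refine lt_of_lt_of_le hqpos ?_
        exact Finset.single_le_sum (fun a _ => hqnn a z b) (Finset.mem_univ a)
      have hBpos : 0 < IT.dist w B b := by
        rw [marg_B w A Z B b]
        refine lt_of_lt_of_le hqpos ?_
        calc q ≤ ∑ z', IT.dist w (fun ω => (A ω, (Z ω, B ω))) (a, (z', b)) :=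
              Finset.single_le_sum (fun z _ => hqnn a z b) (Finset.mem_univ z)
          _ ≤ _ := by
              refine Finset.single_le_sum (f := fun a =>
                ∑ z', IT.dist w (fun ω => (A ω, (Z ω, B ω))) (a, (z', b)))
                (fun a _ => ?_) (Finset.mem_univ a)
              exact Finset.sum_nonneg fun z _ => hqnn a z b
      have hlog : Real.logb 2 q + Real.logb 2 (IT.dist w B b)
          = Real.logb 2 (IT.dist w (fun ω => (A ω, B ω)) (a, b))
            + Real.logb 2 (IT.dist w (fun ω => (Z ω, B ω)) (z, b)) := by
        rw [← Real.logb_mul hq0 (ne_of_gt hBpos), hqdef, h a z b,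
          Real.logb_mul (ne_of_gt hABpos) (ne_of_gt hZBpos)]
      nlinarith [hlog]
  have eAB : IT.H w (fun ω => (A ω, B ω))
      = -∑ a, ∑ z, ∑ b, IT.dist w (fun ω => (A ω, (Z ω, B ω))) (a, (z, b))
          * Real.logb 2 (IT.dist w (fun ω => (A ω, B ω)) (a, b)) := by
    unfold IT.H
    rw [Fintype.sum_prod_type]
    congr 1
    refine Finset.sum_congr rfl fun a _ => ?_
    rw [Finset.sum_comm]
    exact Finset.sum_congr rfl fun b _ => sum_mul_logb_marg _ _ (marg_AB w A Z B a b)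
  have eAZB : IT.H w (fun ω => (A ω, (Z ω, B ω)))
      = -∑ a, ∑ z, ∑ b, IT.dist w (fun ω => (A ω, (Z ω, B ω))) (a, (z, b))
          * Real.logb 2 (IT.dist w (fun ω => (A ω, (Z ω, B ω))) (a, (z, b))) := by
    unfold IT.H
    rw [Fintype.sum_prod_type]
    congr 1
    refine Finset.sum_congr rfl fun a _ => ?_
    rw [Fintype.sum_prod_type]
  have eZB : IT.H w (fun ω => (Z ω, B ω))
      = -∑ a, ∑ z, ∑ b, IT.dist w (fun ω => (A ω, (Z ω, B ω))) (a, (z, b))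
          * Real.logb 2 (IT.dist w (fun ω => (Z ω, B ω)) (z, b)) := by
    unfold IT.H
    rw [Fintype.sum_prod_type]
    congr 1
    have e1 : ∀ z b, IT.dist w (fun ω => (Z ω, B ω)) (z, b)
        * Real.logb 2 (IT.dist w (fun ω => (Z ω, B ω)) (z, b))
        = ∑ a, IT.dist w (fun ω => (A ω, (Z ω, B ω))) (a, (z, b))
            * Real.logb 2 (IT.dist w (fun ω => (Z ω, B ω)) (z, b)) :=
      fun z b => sum_mul_logb_marg _ _ (marg_ZB w A Z B z b)
    calc ∑ z, ∑ b, IT.dist w (fun ω => (Z ω, B ω)) (z, b)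
            * Real.logb 2 (IT.dist w (fun ω => (Z ω, B ω)) (z, b))
        = ∑ z, ∑ b, ∑ a, IT.dist w (fun ω => (A ω, (Z ω, B ω))) (a, (z, b))
            * Real.logb 2 (IT.dist w (fun ω => (Z ω, B ω)) (z, b)) := by
          exact Finset.sum_congr rfl fun z _ => Finset.sum_congr rfl fun b _ => e1 z b
      _ = ∑ a, ∑ z, ∑ b, IT.dist w (fun ω => (A ω, (Z ω, B ω))) (a, (z, b))
            * Real.logb 2 (IT.dist w (fun ω => (Z ω, B ω)) (z, b)) := by
          calc ∑ z : β, ∑ b : γ, ∑ a : α, IT.dist w (fun ω => (A ω, (Z ω, B ω))) (a, (z, b))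
                  * Real.logb 2 (IT.dist w (fun ω => (Z ω, B ω)) (z, b))
              = ∑ z : β, ∑ a : α, ∑ b : γ, IT.dist w (fun ω => (A ω, (Z ω, B ω))) (a, (z, b))
                  * Real.logb 2 (IT.dist w (fun ω => (Z ω, B ω)) (z, b)) :=
                Finset.sum_congr rfl fun z _ => Finset.sum_comm
            _ = _ := Finset.sum_comm
  have eB : IT.H w B
      = -∑ a, ∑ z, ∑ b, IT.dist w (fun ω => (A ω, (Z ω, B ω))) (a, (z, b))
          * Real.logb 2 (IT.dist w B b) := by
    unfold IT.H
    congr 1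
    have e1 : ∀ b, IT.dist w B b * Real.logb 2 (IT.dist w B b)
        = ∑ a, ∑ z, IT.dist w (fun ω => (A ω, (Z ω, B ω))) (a, (z, b))
            * Real.logb 2 (IT.dist w B b) := by
      intro b
      rw [sum_mul_logb_marg _ _ (marg_B w A Z B b)]
      exact Finset.sum_congr rfl fun a _ => Finset.sum_mul _ _ _
    calc ∑ b, IT.dist w B b * Real.logb 2 (IT.dist w B b)
        = ∑ b, ∑ a, ∑ z, IT.dist w (fun ω => (A ω, (Z ω, B ω))) (a, (z, b))
            * Real.logb 2 (IT.dist w B b) := Finset.sum_congr rfl fun b _ => e1 b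
      _ = ∑ a, ∑ b, ∑ z, IT.dist w (fun ω => (A ω, (Z ω, B ω))) (a, (z, b))
            * Real.logb 2 (IT.dist w B b) := Finset.sum_comm

      _ = ∑ a, ∑ z, ∑ b, IT.dist w (fun ω => (A ω, (Z ω, B ω))) (a, (z, b))
            * Real.logb 2 (IT.dist w B b) :=
          Finset.sum_congr rfl fun a _ => Finset.sum_comm
  have hsum : ∑ a, ∑ z, ∑ b,
      (IT.dist w (fun ω => (A ω, (Z ω, B ω))) (a, (z, b))
          * Real.logb 2 (IT.dist w (fun ω => (A ω, (Z ω, B ω))) (a, (z, b)))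
        + IT.dist w (fun ω => (A ω, (Z ω, B ω))) (a, (z, b)) * Real.logb 2 (IT.dist w B b)
        - IT.dist w (fun ω => (A ω, (Z ω, B ω))) (a, (z, b))
          * Real.logb 2 (IT.dist w (fun ω => (A ω, B ω)) (a, b))
        - IT.dist w (fun ω => (A ω, (Z ω, B ω))) (a, (z, b))
          * Real.logb 2 (IT.dist w (fun ω => (Z ω, B ω)) (z, b))) = 0 :=
    Finset.sum_eq_zero fun a _ => Finset.sum_eq_zero fun z _ =>
      Finset.sum_eq_zero fun b _ => key a z b
  unfold IT.condMutInfo IT.condH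
  rw [eAB, eAZB, eZB, eB]
  simp only [Finset.sum_sub_distrib, Finset.sum_add_distrib] at hsum
  linarith

end General
section Split
variable {α : Type*} {n : ℕ}

lemma iidW_split [Fintype α] (p : α → ℝ) (t : Fin n) (v : α)
    (r : {j : Fin n // j ≠ t} → α) :
    iidW p n ((Equiv.funSplitAt t α).symm (v, r)) = p v * ∏ s', p (r s') := by
  classical
  unfold iidW
  rw [Finset.prod_eq_mul_prod_sdiff_singleton_of_mem (Finset.mem_univ t)]
  congr 1
  · rw [Equiv.funSplitAt_symm_apply]; simp
  · rw [Finset.prod_subtype (p := fun s => s ≠ t) (Finset.univ \ {t}) (by simp)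
      (fun s => p ((Equiv.funSplitAt t α).symm (v, r) s))]
    refine Finset.prod_congr rfl fun s' _ => ?_
    rw [Equiv.funSplitAt_symm_apply]
    simp [s'.prop]

open Classical in
lemma dist_iid_split {δ : Type*} [Fintype δ] [Fintype α] (p : α → ℝ) (t : Fin n)
    (X : (Fin n → α) → δ) (d : δ) :
    IT.dist (iidW p n) X d
      = ∑ v : α, ∑ r : ({j : Fin n // j ≠ t} → α),
          (if X ((Equiv.funSplitAt t α).symm (v, r)) = d then p v * ∏ s', p (r s') else 0) := by
  unfold IT.dist
  rw [← Equiv.sum_comp (Equiv.funSplitAt t α).symm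
    (fun ω => if X ω = d then iidW p n ω else 0), Fintype.sum_prod_type]
  exact Finset.sum_congr rfl fun v _ => Finset.sum_congr rfl fun r _ => by
    simp only [iidW_split]

end Split
open IT

/-- **Lemma (interactive encoding of two nodes), item 6:**
`(J_x^{[1:K]}, J_y^{[1:K]}, X_{[1:t-1]}, X_{[t+1:n]}, Z_{[1:t-1]}, Z_{[t+1:n]}, Y_{[1:t-1]})
  -∘- (X_t, Y_t) -∘- Z_t`. -/
theorem two_node_interactive_markov_item6
    {XA YA ZA : Type} [Fintype XA] [Fintype YA] [Fintype ZA]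
    (p : XA × YA × ZA → ℝ) (hp : IsPMF p)
    {n K : ℕ} (mx my : Fin K → ℕ)
    (Jx : (l : Fin K) → (Fin n → XA × YA × ZA) → Fin (mx l))
    (Jy : (l : Fin K) → (Fin n → XA × YA × ZA) → Fin (my l))
    -- J_x^l = f_x^l(Xⁿ, J_x^{[1:l-1]}, J_y^{[1:l-1]})
    (hJx : ∀ l : Fin K, ∃ f : (Fin n → XA) →
        ((k : Fin K) → k.val < l.val → Fin (mx k)) →
        ((k : Fin K) → k.val < l.val → Fin (my k)) → Fin (mx l),
      ∀ ω, Jx l ω = f (fun t => (ω t).1) (fun k _ => Jx k ω) (fun k _ => Jy k ω))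
    -- J_y^l = f_y^l(Yⁿ, J_x^{[1:l]}, J_y^{[1:l-1]})
    (hJy : ∀ l : Fin K, ∃ f : (Fin n → YA) →
        ((k : Fin K) → k.val ≤ l.val → Fin (mx k)) →
        ((k : Fin K) → k.val < l.val → Fin (my k)) → Fin (my l),
      ∀ ω, Jy l ω = f (fun t => (ω t).2.1) (fun k _ => Jx k ω) (fun k _ => Jy k ω))
    :
    ∀ t : Fin n,
      IT.condMutInfo (iidW p n)
        (fun ω => ((fun k => Jx k ω), (fun k => Jy k ω),
          below t.val (fun s => (ω s).1), above t.val (fun s => (ω s).1),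
          below t.val (fun s => (ω s).2.2), above t.val (fun s => (ω s).2.2),
          below t.val (fun s => (ω s).2.1)))
        (fun ω => (ω t).2.2)
        (fun ω => ((ω t).1, (ω t).2.1)) = 0 := by
  
  intro t
  classical
  have hw : ∀ ω, 0 ≤ iidW p n ω := fun ω => Finset.prod_nonneg fun s _ => hp.1 _
  set A : (Fin n → XA × YA × ZA) →
      ((k : Fin K) → Fin (mx k)) × ((k : Fin K) → Fin (my k)) ×
      (Fin n → Option XA) × (Fin n → Option XA) ×
      (Fin n → Option ZA) × (Fin n → Option ZA) × (Fin n → Option YA) :=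
    fun ω => ((fun k => Jx k ω), (fun k => Jy k ω),
      below t.val (fun s => (ω s).1), above t.val (fun s => (ω s).1),
      below t.val (fun s => (ω s).2.2), above t.val (fun s => (ω s).2.2),
      below t.val (fun s => (ω s).2.1)) with hA
  have Jdep : ∀ (ω ω' : Fin n → XA × YA × ZA),
      (∀ s, (ω s).1 = (ω' s).1) → (∀ s, (ω s).2.1 = (ω' s).2.1) →
      ∀ l : Fin K, Jx l ω = Jx l ω' ∧ Jy l ω = Jy l ω' := by
    intro ω ω' hX hY
    have hXn : (fun s => (ω s).1) = (fun s => (ω' s).1) := funext hX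
    have hYn : (fun s => (ω s).2.1) = (fun s => (ω' s).2.1) := funext hY
    have main : ∀ m : ℕ, ∀ l : Fin K, l.val = m →
        Jx l ω = Jx l ω' ∧ Jy l ω = Jy l ω' := by
      intro m
      induction m using Nat.strong_induction_on with
      | _ m IH =>
        intro l hl
        obtain ⟨fx, hfx⟩ := hJx l
        obtain ⟨fy, hfy⟩ := hJy l
        have hx : Jx l ω = Jx l ω' := by
          have e1 : (fun (k : Fin K) (_ : k.val < l.val) => Jx k ω)
              = (fun k _ => Jx k ω') := by
            funext k h
            exact (IH k.val (hl ▸ h) k rfl).1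
          have e2 : (fun (k : Fin K) (_ : k.val < l.val) => Jy k ω)
              = (fun k _ => Jy k ω') := by
            funext k h
            exact (IH k.val (hl ▸ h) k rfl).2
          rw [hfx ω, hfx ω', hXn, e1, e2]
        have hy : Jy l ω = Jy l ω' := by
          have e1 : (fun (k : Fin K) (_ : k.val ≤ l.val) => Jx k ω)
              = (fun k _ => Jx k ω') := by
            funext k h
            rcases lt_or_eq_of_le h with h' | h'
            · exact (IH k.val (hl ▸ h') k rfl).1
            · have hkl : k = l := Fin.ext h'
              subst hkl
              exact hx
          have e2 : (fun (k : Fin K) (_ : k.val < l.val) => Jy k ω)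
              = (fun k _ => Jy k ω') := by
            funext k h
            exact (IH k.val (hl ▸ h) k rfl).2
          rw [hfy ω, hfy ω', hYn, e1, e2]
        exact ⟨hx, hy⟩
    exact fun l => main l.val l rfl
  have hAdep : ∀ ω ω' : Fin n → XA × YA × ZA,
      (∀ s, (ω s).1 = (ω' s).1) → (∀ s, (ω s).2.1 = (ω' s).2.1) →
      (∀ s, s ≠ t → (ω s).2.2 = (ω' s).2.2) → A ω = A ω' := by
    intro ω ω' hX hY hZ
    have hjx : (fun k => Jx k ω) = (fun k => Jx k ω') :=
      funext fun k => (Jdep ω ω' hX hY k).1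
    have hjy : (fun k => Jy k ω) = (fun k => Jy k ω') :=
      funext fun k => (Jdep ω ω' hX hY k).2
    have hXn : (fun s => (ω s).1) = (fun s => (ω' s).1) := funext hX
    have hYn : (fun s => (ω s).2.1) = (fun s => (ω' s).2.1) := funext hY
    have hbz : below t.val (fun s => (ω s).2.2) = below t.val (fun s => (ω' s).2.2) := by
      funext s
      unfold below
      by_cases h : s.val < t.val
      · rw [if_pos h, if_pos h]
        exact congrArg some (hZ s (fun he => by subst he; omega))
      · rw [if_neg h, if_neg h]
    have haz : above t.val (fun s => (ω s).2.2) = above t.val (fun s => (ω' s).2.2) := by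
      funext s
      unfold above
      by_cases h : t.val < s.val
      · rw [if_pos h, if_pos h]
        exact congrArg some (hZ s (fun he => by subst he; omega))
      · rw [if_neg h, if_neg h]
    simp only [hA]
    rw [hjx, hjy, hXn, hYn, hbz, haz]
  refine condMutInfo_eq_zero_of_indep (iidW p n) hw A
    (fun ω => (ω t).2.2) (fun ω => ((ω t).1, (ω t).2.1)) ?_
  intro a z b
  obtain ⟨x, y⟩ := b
  have happ_t : ∀ (v : XA × YA × ZA) (r : {j : Fin n // j ≠ t} → XA × YA × ZA),
      (Equiv.funSplitAt t (XA × YA × ZA)).symm (v, r) t = v := by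
    intro v r; rw [Equiv.funSplitAt_symm_apply]; simp
  have happ_ne : ∀ (v : XA × YA × ZA) (r : {j : Fin n // j ≠ t} → XA × YA × ZA)
      (s : Fin n) (h : s ≠ t),
      (Equiv.funSplitAt t (XA × YA × ZA)).symm (v, r) s = r ⟨s, h⟩ := by
    intro v r s h; rw [Equiv.funSplitAt_symm_apply]; simp [h]
  have hAeq : ∀ (z1 z2 : ZA) (r : {j : Fin n // j ≠ t} → XA × YA × ZA),
      A ((Equiv.funSplitAt t (XA × YA × ZA)).symm ((x, y, z1), r))
        = A ((Equiv.funSplitAt t (XA × YA × ZA)).symm ((x, y, z2), r)) := by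
    intro z1 z2 r
    apply hAdep
    · intro s
      by_cases hs : s = t
      · subst hs; rw [happ_t, happ_t]
      · rw [happ_ne _ _ _ hs, happ_ne _ _ _ hs]
    · intro s
      by_cases hs : s = t
      · subst hs; rw [happ_t, happ_t]
      · rw [happ_ne _ _ _ hs, happ_ne _ _ _ hs]
    · intro s hs
      rw [happ_ne _ _ _ hs, happ_ne _ _ _ hs]
  set R : ZA → ℝ := fun z' => ∑ r : {j : Fin n // j ≠ t} → XA × YA × ZA,
    (if A ((Equiv.funSplitAt t (XA × YA × ZA)).symm ((x, y, z'), r)) = a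
      then ∏ s', p (r s') else 0) with hR
  set T : ℝ := ∑ r : {j : Fin n // j ≠ t} → XA × YA × ZA, ∏ s', p (r s') with hT
  have hRz : ∀ z1 z2 : ZA, R z1 = R z2 := by
    intro z1 z2
    simp only [hR]
    exact Finset.sum_congr rfl fun r _ => by rw [hAeq z1 z2 r]
  have c1 : ∀ z' : ZA,
      IT.dist (iidW p n) (fun ω => (A ω, ((ω t).2.2, ((ω t).1, (ω t).2.1))))
        (a, (z', (x, y))) = p (x, y, z') * R z' := by
    intro z'
    rw [dist_iid_split p t]
    refine (Finset.sum_eq_single_of_mem ((x, y, z') : XA × YA × ZA)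
      (Finset.mem_univ _) ?_).trans ?_
    · intro v _ hv
      refine Finset.sum_eq_zero fun r _ => if_neg fun hcond => hv ?_
      rw [happ_t] at hcond
      simp only [Prod.mk.injEq] at hcond
      obtain ⟨-, h1, h2, h3⟩ := hcond
      exact Prod.ext h2 (Prod.ext h3 h1)
    · simp only [hR]
      rw [Finset.mul_sum]
      refine Finset.sum_congr rfl fun r _ => ?_
      rw [happ_t]
      by_cases hc : A ((Equiv.funSplitAt t (XA × YA × ZA)).symm ((x, y, z'), r)) = a
      · simp [hc]
      · simp [hc]
  have c2 : ∀ z' : ZA,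
      IT.dist (iidW p n) (fun ω => ((ω t).2.2, ((ω t).1, (ω t).2.1)))
        (z', (x, y)) = p (x, y, z') * T := by
    intro z'
    rw [dist_iid_split p t]
    refine (Finset.sum_eq_single_of_mem ((x, y, z') : XA × YA × ZA)
      (Finset.mem_univ _) ?_).trans ?_
    · intro v _ hv
      refine Finset.sum_eq_zero fun r _ => if_neg fun hcond => hv ?_
      rw [happ_t] at hcond
      simp only [Prod.mk.injEq] at hcond
      obtain ⟨h1, h2, h3⟩ := hcond
      exact Prod.ext h2 (Prod.ext h3 h1)
    · simp only [hT]
      rw [Finset.mul_sum]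
      refine Finset.sum_congr rfl fun r _ => ?_
      rw [happ_t]
      simp
  have mB : IT.dist (iidW p n) (fun ω => ((ω t).1, (ω t).2.1)) (x, y)
      = (∑ z' : ZA, p (x, y, z')) * T := by
    rw [marg_single (iidW p n) (fun ω => (ω t).2.2) (fun ω => ((ω t).1, (ω t).2.1)) (x, y)]
    rw [Finset.sum_congr rfl fun z' _ => c2 z', ← Finset.sum_mul]
  have mAB : IT.dist (iidW p n) (fun ω => (A ω, ((ω t).1, (ω t).2.1))) (a, (x, y))
      = (∑ z' : ZA, p (x, y, z')) * R z := by
    rw [marg_AB (iidW p n) A (fun ω => (ω t).2.2) (fun ω => ((ω t).1, (ω t).2.1)) a (x, y)]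
    rw [Finset.sum_congr rfl fun z' _ => c1 z']
    rw [Finset.sum_congr rfl fun z' _ => by rw [hRz z' z]]
    rw [← Finset.sum_mul]
  rw [c1 z, c2 z, mB, mAB]
  ring
end
end
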